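/- Let g be an even integer with g ≥ 2, and let ℓ_g(n) denote the word length of n with respect to the generating set A_g = {0} ∪ {±gⁱ : i ≥ 0} of the additive group ℤ. If n = Σ_{i≥0} εᵢ gⁱ is the representation with εᵢ ∈ {0, ±1, ..., ±g/2}, finitely many εᵢ nonzero, and (|εᵢ| = g/2 implies |ε_{i+1}| < g/2 and εᵢε_{i+1} ≥ 0), then ℓ_g(n) = Σ_{i≥0} |εᵢ|. -/

import Mathlib

def Ag (g : ℤ) : Set ℤ := {0} ∪ {x | ∃ i : ℕ, x = g ^ i ∨ x = -g ^ i}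

noncomputable def lg (g : ℤ) (n : ℤ) : ℕ :=
  sInf {h | ∃ l : List ℤ, (∀ a ∈ l, a ∈ Ag g) ∧ l.sum = n ∧ l.length = h}

/-
Write `g = 2k`. Collecting the letters `±1` of a word over `A_g` and dividing the remaining
letters by `g` turns a word for `n` into a decomposition `n = e + g q` with `|e| ≤ k` and
`|e| + ℓ(q) ≤ ℓ(n)`; conversely `ℓ(e + g q) ≤ |e| + ℓ(q)`. Two balanced digits congruent
mod `g` coincide unless they are `±k`, so `ℓ(ε₀ + g q) = |ε₀| + ℓ(q)` as soon as `|ε₀| < k`.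
If `|ε₀| = k`, the rival digit `-ε₀` carries `±1` into `q`, and the condition on `ε₁` makes
that carry cost at least as much as it saves. Induction on the number of digits concludes.
-/

namespace Ag

variable {g : ℤ}

lemma pow_mem (i : ℕ) : g ^ i ∈ Ag g := Or.inr ⟨i, Or.inl rfl⟩

lemma neg_pow_mem (i : ℕ) : -g ^ i ∈ Ag g := Or.inr ⟨i, Or.inr rfl⟩

lemma one_mem : 1 ∈ Ag g := by simpa using pow_mem (g := g) 0

lemma neg_one_mem : -1 ∈ Ag g := by simpa using neg_pow_mem (g := g) 0

lemma sign_mem (n : ℤ) : n.sign ∈ Ag g := by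
  rcases Int.sign_trichotomy n with h | h | h <;> rw [h]
  exacts [one_mem, Or.inl rfl, neg_one_mem]

lemma mul_mem {a : ℤ} (ha : a ∈ Ag g) : g * a ∈ Ag g := by
  rcases ha with rfl | ⟨i, rfl | rfl⟩
  · exact Or.inl (mul_zero g)
  · simpa [pow_succ'] using pow_mem (i + 1)
  · simpa [pow_succ'] using neg_pow_mem (i + 1)

end Ag

section WordLength

variable {g : ℤ}

lemma lg_le_length {l : List ℤ} (hl : ∀ a ∈ l, a ∈ Ag g) : lg g l.sum ≤ l.length :=
  Nat.sInf_le ⟨l, hl, rfl, rfl⟩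

lemma sum_replicate_natAbs_sign (n : ℤ) : (List.replicate n.natAbs n.sign).sum = n := by
  rw [List.sum_replicate, nsmul_eq_mul, mul_comm, Int.sign_mul_natAbs]

lemma mem_Ag_of_mem_replicate_sign {n a : ℤ} (ha : a ∈ List.replicate n.natAbs n.sign) :
    a ∈ Ag g :=
  List.eq_of_mem_replicate ha ▸ Ag.sign_mem n

lemma lg_le_natAbs (n : ℤ) : lg g n ≤ n.natAbs := by
  have := lg_le_length (g := g) fun _ => mem_Ag_of_mem_replicate_sign (n := n)
  rwa [sum_replicate_natAbs_sign, List.length_replicate] at this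

lemma lg_zero : lg g 0 = 0 := Nat.le_zero.mp (lg_le_natAbs 0)

lemma exists_list_length_eq_lg (g n : ℤ) :
    ∃ l : List ℤ, (∀ a ∈ l, a ∈ Ag g) ∧ l.sum = n ∧ l.length = lg g n :=
  Nat.sInf_mem (s := {h | ∃ l : List ℤ, (∀ a ∈ l, a ∈ Ag g) ∧ l.sum = n ∧ l.length = h})
    ⟨_, _, fun _ => mem_Ag_of_mem_replicate_sign, sum_replicate_natAbs_sign n, rfl⟩

lemma lg_add_le (a b : ℤ) : lg g (a + b) ≤ lg g a + lg g b := by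
  obtain ⟨l, hl, rfl, hla⟩ := exists_list_length_eq_lg g a
  obtain ⟨m, hm, rfl, hmb⟩ := exists_list_length_eq_lg g b
  rw [← hla, ← hmb, ← List.length_append, ← List.sum_append]
  exact lg_le_length fun x hx => (List.mem_append.mp hx).elim (hl x) (hm x)

lemma lg_le_one {a : ℤ} (ha : a ∈ Ag g) : lg g a ≤ 1 := by
  simpa using lg_le_length (l := [a]) (by simpa using ha)

lemma lg_add_mem_le {a : ℤ} (ha : a ∈ Ag g) (m : ℤ) : lg g (m + a) ≤ lg g m + 1 :=
  (lg_add_le m a).trans (Nat.add_le_add_left (lg_le_one ha) _)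

lemma lg_mul_le (m : ℤ) : lg g (g * m) ≤ lg g m := by
  obtain ⟨l, hl, rfl, hlm⟩ := exists_list_length_eq_lg g m
  have hsum : (l.map (g * ·)).sum = g * l.sum := by
    simpa using List.sum_map_mul_left (l := l) (f := id) (r := g)
  rw [← hlm, ← hsum, ← List.length_map (f := (g * ·))]
  exact lg_le_length fun x hx => by
    obtain ⟨a, ha, rfl⟩ := List.mem_map.mp hx
    exact Ag.mul_mem (hl a ha)

lemma lg_add_mul_le (e q : ℤ) : (lg g (e + g * q) : ℤ) ≤ |e| + lg g q := by
  have := (lg_add_le (g := g) e (g * q)).trans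
    (Nat.add_le_add (lg_le_natAbs e) (lg_mul_le q))
  rw [Int.abs_eq_natAbs]
  exact_mod_cast this

end WordLength

section BalancedDigits

variable {k : ℤ}

lemma exists_balanced_digit_le_length (hk : 0 < k) {l : List ℤ} (hl : ∀ a ∈ l, a ∈ Ag (2 * k)) :
    ∃ e q, l.sum = e + 2 * k * q ∧ |e| ≤ k ∧ |e| + lg (2 * k) q ≤ l.length := by
  induction l with
  | nil => exact ⟨0, 0, by simp, by simp [hk.le], by simp [lg_zero]⟩
  | cons a l ih =>
    obtain ⟨e, q, hsum, hek, hcost⟩ := ih fun x hx => hl x (List.mem_cons_of_mem a hx)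
    have hadd : ∀ b ∈ Ag (2 * k), (lg (2 * k) (q + b) : ℤ) ≤ lg (2 * k) q + 1 :=
      fun b hb => by exact_mod_cast lg_add_mem_le hb q
    simp only [List.sum_cons, List.length_cons, Nat.cast_add, Nat.cast_one] at hsum hcost ⊢
    have hunit : ∀ s : ℤ, (s = 1 ∨ s = -1) → s ∈ Ag (2 * k) → ∃ e' q',
        s + l.sum = e' + 2 * k * q' ∧ |e'| ≤ k ∧ |e'| + lg (2 * k) q' ≤ l.length + 1 := by
      intro s hs hsA
      by_cases hes : |e + s| ≤ k
      · refine ⟨e + s, q, by rw [hsum]; ring, hes, ?_⟩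
        have := abs_add_le e s
        rcases hs with rfl | rfl <;> simp only [abs_one, abs_neg] at this <;> linarith
      · -- the overflowing digit `s * (k + 1)` is rewritten as `s * (1 - k)` with a carry of `s`
        refine ⟨e + s - 2 * k * s, q + s, by rw [hsum]; ring, ?_, ?_⟩ <;>
        · have := hadd s hsA
          simp only [Int.abs_eq_natAbs] at hek hes hcost ⊢
          rcases hs with rfl | rfl <;> omega
    rcases hl a List.mem_cons_self with rfl | ⟨_ | i, rfl | rfl⟩
    · exact ⟨e, q, by rw [hsum, zero_add], hek, by linarith⟩
    · simpa using hunit 1 (Or.inl rfl) Ag.one_mem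
    · simpa using hunit (-1) (Or.inr rfl) Ag.neg_one_mem
    · refine ⟨e, q + (2 * k) ^ i, by rw [hsum]; ring, hek, ?_⟩
      linarith [hadd _ (Ag.pow_mem i)]
    · refine ⟨e, q + -(2 * k) ^ i, by rw [hsum]; ring, hek, ?_⟩
      linarith [hadd _ (Ag.neg_pow_mem i)]

lemma exists_balanced_digit_le_lg (hk : 0 < k) (n : ℤ) :
    ∃ e q, n = e + 2 * k * q ∧ |e| ≤ k ∧ |e| + lg (2 * k) q ≤ lg (2 * k) n := by
  obtain ⟨l, hl, rfl, hlen⟩ := exists_list_length_eq_lg (2 * k) n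
  rw [← hlen]
  exact exists_balanced_digit_le_length hk hl

lemma balanced_digit_unique (hk : 0 < k) {e e' q q' : ℤ} (h : e + 2 * k * q = e' + 2 * k * q')
    (he : |e| ≤ k) (he' : |e'| ≤ k) :
    (e' = e ∧ q' = q) ∨ ∃ t, (t = 1 ∨ t = -1) ∧ e = k * t ∧ e' = -(k * t) ∧ q' = q + t := by
  have hdiff : e - e' = 2 * k * (q' - q) := by linear_combination h
  have ht : |q' - q| ≤ 1 := by
    have : |e - e'| ≤ 2 * k := by
      simp only [Int.abs_eq_natAbs] at he he' ⊢; omega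
    rw [hdiff, abs_mul, abs_of_pos (by omega : (0 : ℤ) < 2 * k)] at this
    nlinarith [abs_nonneg (q' - q)]
  simp only [Int.abs_eq_natAbs] at he he' ht
  rcases (by omega : q' - q = 0 ∨ q' - q = 1 ∨ q' - q = -1) with h0 | h1 | h1
  · obtain rfl : q' = q := by omega
    exact Or.inl ⟨by linarith, rfl⟩
  all_goals
    right
    refine ⟨q' - q, by omega, ?_, ?_, by ring⟩ <;> rw [h1] at hdiff ⊢ <;> omega

lemma lg_le_lg_add_sign (hk : 0 < k) {d q s : ℤ} (hs : s = 1 ∨ s = -1) (hd : |d| < k)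
    (hsd : 0 ≤ s * d) : lg (2 * k) (d + 2 * k * q) ≤ lg (2 * k) (d + 2 * k * q + s) := by
  have hds : |d + s| = |d| + 1 := by
    simp only [Int.abs_eq_natAbs]; rcases hs with rfl | rfl <;> omega
  obtain ⟨e, q', hsplit, he, hcost⟩ := exists_balanced_digit_le_lg hk (d + 2 * k * q + s)
  have hupper := lg_add_mul_le (g := 2 * k) d q
  rcases balanced_digit_unique hk (e := d + s) (q := q) (e' := e) (q' := q')
    (by rw [← hsplit]; ring)
    (by rw [hds]; omega) he with ⟨rfl, rfl⟩ | ⟨t, ht, hdst, rfl, rfl⟩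
  · omega
  · -- the carry `t` costs at most one letter, which the digit `|d| = k - 1` pays for
    have hcarry : (lg (2 * k) q : ℤ) ≤ lg (2 * k) (q + t) + 1 := by
      have hneg : -t ∈ Ag (2 * k) := by
        rcases ht with rfl | rfl
        exacts [Ag.neg_one_mem, by simpa using Ag.one_mem]
      have := lg_add_mem_le hneg (q + t)
      rw [add_neg_cancel_right] at this
      exact_mod_cast this
    have : |-(k * t)| = k := by
      rcases ht with rfl | rfl <;> simp [abs_of_pos hk]
    omega

lemma lg_add_mul_eq (hk : 0 < k) {e q : ℤ} (he : |e| ≤ k)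
    (hnext : |e| = k → ∃ d q', q = d + 2 * k * q' ∧ |d| < k ∧ 0 ≤ e * d) :
    (lg (2 * k) (e + 2 * k * q) : ℤ) = |e| + lg (2 * k) q := by
  refine le_antisymm (lg_add_mul_le e q) ?_
  obtain ⟨e', q', hsplit, he', hcost⟩ := exists_balanced_digit_le_lg hk (e + 2 * k * q)
  rcases balanced_digit_unique hk hsplit he he' with ⟨rfl, rfl⟩ | ⟨t, ht, rfl, rfl, rfl⟩
  · exact hcost
  · have hkt : |k * t| = k := by rcases ht with rfl | rfl <;> simp [abs_of_pos hk]
    obtain ⟨d, q'', rfl, hd, hed⟩ := hnext hkt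
    have htd : 0 ≤ t * d := by
      rw [mul_assoc] at hed
      exact nonneg_of_mul_nonneg_right (by linarith) hk
    have := lg_le_lg_add_sign hk (q := q'') ht hd htd
    rw [abs_neg, hkt] at hcost
    rw [hkt]
    linarith [(Nat.cast_le (α := ℤ)).mpr this]

lemma sum_range_succ_mul_pow (g : ℤ) (ε : ℕ → ℤ) (N : ℕ) :
    ∑ i ∈ Finset.range (N + 1), ε i * g ^ i =
      ε 0 + g * ∑ i ∈ Finset.range N, ε (i + 1) * g ^ i := by
  rw [Finset.sum_range_succ', Finset.mul_sum, add_comm]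
  simp only [pow_succ, pow_zero, mul_one]
  congr 1
  exact Finset.sum_congr rfl fun i _ => by ring

lemma lg_sum_range_mul_pow (hk : 0 < k) (ε : ℕ → ℤ) (hε : ∀ i, |ε i| ≤ k)
    (hnext : ∀ i, |ε i| = k → |ε (i + 1)| < k ∧ 0 ≤ ε i * ε (i + 1)) (N : ℕ) :
    (lg (2 * k) (∑ i ∈ Finset.range N, ε i * (2 * k) ^ i) : ℤ) =
      ∑ i ∈ Finset.range N, |ε i| := by
  induction N generalizing ε with
  | zero => simp [lg_zero]
  | succ N ih =>
    rw [sum_range_succ_mul_pow, Finset.sum_range_succ', add_comm _ |ε 0|,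
      ← ih (fun i => ε (i + 1)) (fun i => hε (i + 1)) (fun i => hnext (i + 1))]
    refine lg_add_mul_eq hk (hε 0) fun h0 => ?_
    obtain ⟨h1, h01⟩ := hnext 0 h0
    cases N with
    | zero => exact ⟨0, 0, by simp, by simpa, by simp⟩
    | succ M => exact ⟨ε 1, _, sum_range_succ_mul_pow _ _ M, h1, h01⟩

end BalancedDigits

theorem stmt7 (g : ℤ) (hg : 2 ≤ g) (hge : Even g) (n : ℤ) (ε : ℕ → ℤ)
    (h1 : ∀ i, |ε i| ≤ g / 2)
    (h2 : Set.Finite {i | ε i ≠ 0})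
    (h3 : ∀ i, |ε i| = g / 2 → |ε (i + 1)| < g / 2 ∧ 0 ≤ ε i * ε (i + 1))
    (h4 : n = ∑ᶠ i, ε i * g ^ i) :
    (lg g n : ℤ) = ∑ᶠ i, |ε i| := by
  obtain ⟨k, rfl⟩ := hge
  rw [← two_mul] at hg h1 h3 h4 ⊢
  rw [Int.mul_ediv_cancel_left _ two_ne_zero] at h1 h3
  obtain ⟨N, hN⟩ := h2.bddAbove
  have hε : Function.support ε ⊆ Finset.range (N + 1) := fun i hi =>
    Finset.mem_coe.mpr (Finset.mem_range.mpr (Nat.lt_succ_of_le (hN hi)))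
  rw [h4, finsum_eq_sum_of_support_subset _ ((Function.support_mul_subset_left _ _).trans hε),
    finsum_eq_sum_of_support_subset (fun i => |ε i|)
      ((Function.support_comp_subset abs_zero ε).trans hε)]
  exact lg_sum_range_mul_pow (by omega) ε h1 h3 (N + 1)
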